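/- There exists a universal constant C > 0 such that for every integer d ≥ 2, all symmetric norms ‖·‖_X and ‖·‖_Y on ℝ^d (invariant under permutations of coordinates and sign changes) with ‖e_i‖_X = ‖e_i‖_Y = 1 for the standard basis vectors, and every natural number k ≥ 2d + ⌈log₂ d⌉ − 1, the entropy numbers satisfy e_k(S_X, B_Y) ≤ C · 2^{−k/(d−1)} · λ_Y(d−1)/λ_X(d−1), where λ_X(ℓ) := ‖∑_{i=1}^ℓ e_i‖_X, λ_Y(ℓ) := ‖∑_{i=1}^ℓ e_i‖_Y, S_X = {x : ‖x‖_X = 1} and B_Y = {x : ‖x‖_Y ≤ 1}. -/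

import Mathlib

open scoped Pointwise BigOperators

/-- A symmetric norm on `ℝ^d`: a norm invariant under permutations of coordinates and under
sign changes. -/
def IsSymmNorm {d : ℕ} (f : (Fin d → ℝ) → ℝ) : Prop :=
  (∀ x, 0 ≤ f x) ∧ (∀ x, f x = 0 ↔ x = 0) ∧
  (∀ (l : ℝ) (x), f (l • x) = |l| * f x) ∧
  (∀ x y, f (x + y) ≤ f x + f y) ∧
  (∀ (π : Equiv.Perm (Fin d)) (ε : Fin d → ℝ), (∀ i, ε i = 1 ∨ ε i = -1) →
    ∀ x : Fin d → ℝ, f (fun i => ε i * x (π i)) = f x)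

/-- `λ_E(ℓ) = ‖∑_{i=1}^ℓ e_i‖_E`, the norm of the sum of the first `ℓ` standard basis
vectors. -/
noncomputable def lam {d : ℕ} (f : (Fin d → ℝ) → ℝ) (l : ℕ) : ℝ :=
  f (fun i => if (i : ℕ) < l then 1 else 0)

/-- The `k`-th (dyadic) entropy number of `K` with respect to the "unit ball" `B`:
the infimum of all `ε > 0` such that `K` can be covered by `2^(k-1)` translates of `ε • B`. -/
noncomputable def entropyNumber {d : ℕ} (K B : Set (Fin d → ℝ)) (k : ℕ) : ℝ :=
  sInf {ε : ℝ | 0 < ε ∧ ∃ c : Fin (2 ^ (k - 1)) → (Fin d → ℝ),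
    K ⊆ ⋃ j, (c j +ᵥ ε • B)}

/-!
Cover `S_X` by the cubes `2 s z + [-s, s]^d`, `z ∈ ℤ^d`, that meet it; each lies in a ball of
`‖·‖_Y`-radius `s λ_Y(d)`. To count them, attach to such a `z` a point `x ∈ S_X` of its cube and a
supporting functional `ν` of `B_X` at `x`, scaled so that its largest coordinate is `ν i = ±1`. Two
points of `S_X` whose functionals share `i` and `ν i` differ in coordinate `i` by at most their
`ℓ¹`-distance in the other coordinates, so `z` is determined by `i`, `ν i`, the other `d - 1`
coordinates of `z` and `z i` modulo `2d + 1`. As `λ_X(d) ‖x‖₁ ≤ d` on `S_X`, those `d - 1`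
coordinates form an integer vector of `ℓ¹`-norm at most `n = d / (2 s λ_X(d)) + (d - 1) / 2`, and
comparing with `∑_{w ∈ ℤ^{d-1}} q ^ ‖w‖₁ = ((1 + q) / (1 - q)) ^ (d - 1)` there are at most
`q ^ (-n) ((1 + q) / (1 - q)) ^ (d - 1)` of them. For `s ≈ C 2^{-k/(d-1)} / λ_X(d)` this is at most
`2^(k-1)` with `q = 1/4` when `2^{k/(d-1)}` is small, which forces `d` to be large unless a single
ball suffices, and with `q` close to `1` otherwise.
-/

open Finset Function

theorem lam_self {d : ℕ} (f : (Fin d → ℝ) → ℝ) : lam f d = f 1 := by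
  unfold lam
  congr 1
  ext i
  simp

namespace IsSymmNorm

variable {d : ℕ} {f : (Fin d → ℝ) → ℝ}

theorem nonneg (hf : IsSymmNorm f) (x : Fin d → ℝ) : 0 ≤ f x := hf.1 x

theorem map_smul (hf : IsSymmNorm f) (l : ℝ) (x : Fin d → ℝ) : f (l • x) = |l| * f x :=
  hf.2.2.1 l x

theorem add_le (hf : IsSymmNorm f) (x y : Fin d → ℝ) : f (x + y) ≤ f x + f y :=
  hf.2.2.2.1 x y

theorem map_zero (hf : IsSymmNorm f) : f 0 = 0 := (hf.2.1 0).2 rfl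

theorem pos (hf : IsSymmNorm f) {x : Fin d → ℝ} (hx : x ≠ 0) : 0 < f x :=
  (hf.nonneg x).lt_of_ne' fun h => hx ((hf.2.1 x).1 h)

theorem map_sign_mul (hf : IsSymmNorm f) (ε : Fin d → ℝ) (hε : ∀ i, ε i = 1 ∨ ε i = -1)
    (x : Fin d → ℝ) : f (fun i => ε i * x i) = f x := by
  simpa using hf.2.2.2.2 (Equiv.refl _) ε hε x

theorem map_comp_perm (hf : IsSymmNorm f) (π : Equiv.Perm (Fin d)) (x : Fin d → ℝ) :
    f (x ∘ π) = f x := by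
  simpa [comp_def] using hf.2.2.2.2 π 1 (fun _ => Or.inl rfl) x

theorem map_abs (hf : IsSymmNorm f) (x : Fin d → ℝ) : f |x| = f x := by
  rw [← hf.map_sign_mul (fun i => if 0 ≤ x i then 1 else -1) (fun i => by split_ifs <;> simp)]
  congr 1
  ext i
  split_ifs with h
  · simp [abs_of_nonneg h]
  · simp [abs_of_neg (not_le.1 h)]

theorem convexOn (hf : IsSymmNorm f) : ConvexOn ℝ Set.univ f :=
  ⟨convex_univ, fun x _ y _ a b ha hb _ => (hf.add_le _ _).trans_eq <| by
    rw [hf.map_smul, hf.map_smul, abs_of_nonneg ha, abs_of_nonneg hb, smul_eq_mul, smul_eq_mul]⟩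

theorem map_update_le (hf : IsSymmNorm f) (v : Fin d → ℝ) (a : Fin d) {b c : ℝ}
    (h : |c| ≤ |b|) : f (update v a c) ≤ f (update v a b) := by
  have hflip : f (update v a (-b)) = f (update v a b) := by
    rw [← hf.map_sign_mul (fun i => if i = a then -1 else 1) (fun i => by split_ifs <;> simp)]
    congr 1
    ext i
    by_cases hi : i = a <;> simp [hi]
  have hc : c ∈ segment ℝ (-b) b := by
    rw [segment_eq_uIcc, Set.mem_uIcc]
    rcases le_total 0 b with hb | hb
    · exact Or.inl (by simpa using abs_le.1 (h.trans_eq (abs_of_nonneg hb)))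
    · exact Or.inr (by simpa using abs_le.1 (h.trans_eq (abs_of_nonpos hb)))
  obtain ⟨α, β, hα, hβ, hαβ, rfl⟩ := hc
  have hsplit : update v a (α • -b + β • b) = α • update v a (-b) + β • update v a b := by
    ext i
    by_cases hi : i = a
    · subst hi; simp
    · simp only [update_of_ne hi, Pi.add_apply, Pi.smul_apply, smul_eq_mul]
      linear_combination (v i) * hαβ.symm
  calc f (update v a (α • -b + β • b))
      ≤ α • f (update v a (-b)) + β • f (update v a b) := by
        rw [hsplit]; exact hf.convexOn.2 (Set.mem_univ _) (Set.mem_univ _) hα hβ hαβ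
    _ = f (update v a b) := by rw [hflip, ← add_smul, hαβ, one_smul]

theorem mono (hf : IsSymmNorm f) {x y : Fin d → ℝ} (h : ∀ i, |x i| ≤ |y i|) : f x ≤ f y := by
  classical
  suffices ∀ s : Finset (Fin d), f (fun i => if i ∈ s then x i else y i) ≤ f y by
    simpa using this univ
  intro s
  induction s using Finset.induction_on with
  | empty => simp
  | insert a s ha ih =>
    set g : Fin d → ℝ := fun i => if i ∈ s then x i else y i
    calc f (fun i => if i ∈ insert a s then x i else y i) = f (update g a (x a)) := by
          congr 1; ext i; by_cases hi : i = a <;> simp [g, hi]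
      _ ≤ f (update g a (g a)) := hf.map_update_le g a (by simpa [g, ha] using h a)
      _ ≤ f y := by rwa [update_eq_self]

theorem abs_apply_le (hf : IsSymmNorm f) (hb : ∀ i, f (Pi.single i 1) = 1) (x : Fin d → ℝ)
    (i : Fin d) : |x i| ≤ f x :=
  calc |x i| = f (x i • Pi.single i 1) := by rw [hf.map_smul, hb, mul_one]
    _ ≤ f x := hf.mono fun j => by
      by_cases hj : j = i
      · subst hj; simp
      · simp [hj]

theorem le_sum_abs (hf : IsSymmNorm f) (hb : ∀ i, f (Pi.single i 1) = 1) (x : Fin d → ℝ) :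
    f x ≤ ∑ i, |x i| :=
  calc f x = f (∑ i, x i • Pi.single i 1) := by
        congr 1; ext j; simp [Finset.sum_apply, Pi.single_apply]
    _ ≤ ∑ i, f (x i • Pi.single i 1) := le_sum_of_subadditive f hf.map_zero.le hf.add_le _ _
    _ = ∑ i, |x i| := by simp [hf.map_smul, hb]

theorem lam_self_pos [NeZero d] (hf : IsSymmNorm f) : 0 < lam f d :=
  lam_self f ▸ hf.pos (Function.ne_iff.2 ⟨0, one_ne_zero⟩)

theorem le_mul_lam (hf : IsSymmNorm f) {x : Fin d → ℝ} {M : ℝ} (hM : 0 ≤ M)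
    (h : ∀ i, |x i| ≤ M) : f x ≤ M * lam f d :=
  calc f x ≤ f (M • 1) := hf.mono fun i => by simpa [abs_of_nonneg hM] using h i
    _ = M * lam f d := by rw [hf.map_smul, abs_of_nonneg hM, lam_self]

theorem lam_mul_sum_abs_le [NeZero d] (hf : IsSymmNorm f) (x : Fin d → ℝ) :
    lam f d * ∑ i, |x i| ≤ d * f x := by
  have hshift : ∀ c : Fin d, f (fun i => |x (i + c)|) = f x := fun c => by
    rw [← hf.map_abs x]; exact hf.map_comp_perm (Equiv.addRight c) |x|
  have hsum : ∑ c : Fin d, (fun i => |x (i + c)|) = (∑ i, |x i|) • 1 := by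
    ext i
    simpa [Finset.sum_apply] using Equiv.sum_comp (Equiv.addLeft i) (fun j => |x j|)
  calc lam f d * ∑ i, |x i| = f ((∑ i, |x i|) • 1) := by
        rw [hf.map_smul, abs_of_nonneg (sum_nonneg fun i _ => abs_nonneg _), lam_self, mul_comm]
    _ ≤ ∑ c : Fin d, f (fun i => |x (i + c)|) := by
        rw [← hsum]; exact le_sum_of_subadditive f hf.map_zero.le hf.add_le _ _
    _ = d * f x := by simp [hshift]

theorem lam_mono (hf : IsSymmNorm f) {l l' : ℕ} (h : l ≤ l') : lam f l ≤ lam f l' :=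
  hf.mono fun i => by split_ifs <;> first | omega | norm_num

theorem one_le_lam [NeZero d] (hf : IsSymmNorm f) (hb : ∀ i, f (Pi.single i 1) = 1) {l : ℕ}
    (hl : 1 ≤ l) : 1 ≤ lam f l := by
  simpa [lam, show (0 : ℕ) < l by omega] using
    hf.abs_apply_le hb (fun i => if (i : ℕ) < l then 1 else 0) 0

theorem lam_self_le (hf : IsSymmNorm f) (hb : ∀ i, f (Pi.single i 1) = 1) : lam f d ≤ d :=
  (lam_self f ▸ hf.le_sum_abs hb 1).trans_eq (by simp)

theorem lam_succ_le (hf : IsSymmNorm f) (hb : ∀ i, f (Pi.single i 1) = 1) (l : ℕ) :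
    lam f (l + 1) ≤ lam f l + 1 := by
  have hsplit : (fun i : Fin d => if (i : ℕ) < l + 1 then (1 : ℝ) else 0) =
      (fun i : Fin d => if (i : ℕ) < l then (1 : ℝ) else 0) +
        (fun i : Fin d => if (i : ℕ) = l then (1 : ℝ) else 0) := by
    ext i
    simp only [Pi.add_apply]
    split_ifs <;> first | omega | norm_num
  have hle : f (fun i : Fin d => if (i : ℕ) = l then 1 else 0) ≤ 1 := by
    refine (hf.le_sum_abs hb _).trans ?_
    have : #{i : Fin d | (i : ℕ) = l} ≤ 1 :=
      card_le_one.2 fun a ha b hb => Fin.ext ((mem_filter.1 ha).2.trans (mem_filter.1 hb).2.symm)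
    simpa [apply_ite] using (Nat.cast_le (α := ℝ)).2 this
  unfold lam
  rw [hsplit]
  linarith [hf.add_le (fun i : Fin d => if (i : ℕ) < l then (1 : ℝ) else 0)
    (fun i => if (i : ℕ) = l then 1 else 0)]

theorem exists_dual (hf : IsSymmNorm f) {x : Fin d → ℝ} (hx : 1 ≤ f x) :
    ∃ ν : Fin d → ℝ, ν ≠ 0 ∧ ∀ y, f y ≤ 1 → ν ⬝ᵥ y ≤ ν ⬝ᵥ x := by
  have hconv : Convex ℝ {y | f y < 1} := by simpa using hf.convexOn.convex_lt 1
  have hopen : IsOpen {y | f y < 1} :=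
    isOpen_lt (continuousOn_univ.1 (hf.convexOn.continuousOn isOpen_univ)) continuous_const
  obtain ⟨F, hF⟩ := geometric_hahn_banach_open_point (x := x) hconv hopen (not_lt.2 hx)
  have hrep : ∀ y, F y = (fun j => F (Pi.single j 1)) ⬝ᵥ y := fun y => by
    conv_lhs => rw [← Finset.univ_sum_single y]
    refine (map_sum F _ _).trans (sum_congr rfl fun j _ => ?_)
    rw [mul_comm, ← smul_eq_mul, ← ContinuousLinearMap.map_smul, ← Pi.single_smul', smul_eq_mul,
      mul_one]
  have hFx : 0 < F x := by simpa using hF 0 (by simp [hf.map_zero])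
  refine ⟨fun j => F (Pi.single j 1), fun h0 => ?_, fun y hy => ?_⟩
  · simp [hrep x, h0] at hFx
  · rw [← hrep, ← hrep]
    by_contra! hlt
    have hFy : 0 < F y := hFx.trans hlt
    have ht : F x / F y < 1 := (div_lt_one hFy).2 hlt
    have hmem : f ((F x / F y) • y) < 1 := by
      rw [hf.map_smul, abs_of_pos (div_pos hFx hFy)]
      exact (mul_le_of_le_one_right (div_pos hFx hFy).le hy).trans_lt ht
    have := hF _ hmem
    rw [ContinuousLinearMap.map_smul, smul_eq_mul, div_mul_cancel₀ _ hFy.ne'] at this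
    exact lt_irrefl _ this

theorem exists_normalized_dual (hf : IsSymmNorm f) {x : Fin d → ℝ} (hx : 1 ≤ f x) :
    ∃ (ν : Fin d → ℝ) (i : Fin d), |ν i| = 1 ∧ (∀ j, |ν j| ≤ 1) ∧
      ∀ y, f y ≤ 1 → ν ⬝ᵥ y ≤ ν ⬝ᵥ x := by
  obtain ⟨ν, hν0, hν⟩ := hf.exists_dual hx
  obtain ⟨j₀, hj₀⟩ := Function.ne_iff.1 hν0
  obtain ⟨i, -, hi⟩ := exists_max_image univ (fun j => |ν j|) ⟨j₀, mem_univ _⟩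
  have hνi : 0 < |ν i| := (abs_pos.2 hj₀).trans_le (hi j₀ (mem_univ _))
  refine ⟨|ν i|⁻¹ • ν, i, ?_, fun j => ?_, fun y hy => ?_⟩
  · simp [abs_mul, hνi.ne']
  · simpa [abs_mul, inv_mul_le_one₀ hνi] using hi j (mem_univ _)
  · simp only [smul_dotProduct, smul_eq_mul]
    exact mul_le_mul_of_nonneg_left (hν y hy) (by positivity)

end IsSymmNorm

section Graph

variable {r : ℕ}

theorem mul_sub_apply_le_of_dotProduct_le {ν x x' : Fin (r + 1) → ℝ} (hν : ∀ j, |ν j| ≤ 1)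
    (h : ν ⬝ᵥ x' ≤ ν ⬝ᵥ x) (i : Fin (r + 1)) :
    ν i * (x' i - x i) ≤ ∑ j, |x (i.succAbove j) - x' (i.succAbove j)| := by
  have h0 : ν ⬝ᵥ (x' - x) ≤ 0 := by rw [dotProduct_sub]; linarith
  rw [dotProduct, Fin.sum_univ_succAbove _ i] at h0
  have hterm : ∀ j, -|x (i.succAbove j) - x' (i.succAbove j)| ≤
      ν (i.succAbove j) * (x' - x) (i.succAbove j) := fun j => by
    refine (neg_le_neg ?_).trans (neg_abs_le _)
    rw [abs_mul, Pi.sub_apply, abs_sub_comm]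
    exact mul_le_of_le_one_left (abs_nonneg _) (hν _)
  have := sum_le_sum fun j (_ : j ∈ univ) => hterm j
  simp only [sum_neg_distrib, Pi.sub_apply] at this h0
  linarith

/-- Where normalized supporting functionals have the dominant coordinate `i` with a fixed sign,
the boundary of the ball is an `ℓ¹`-Lipschitz graph over the hyperplane `x i = 0`. -/
theorem abs_sub_apply_le_of_dotProduct_le {ν ν' x x' : Fin (r + 1) → ℝ} {i : Fin (r + 1)}
    (hν : ∀ j, |ν j| ≤ 1) (hν' : ∀ j, |ν' j| ≤ 1) (hνi : |ν i| = 1) (hνν' : ν i = ν' i)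
    (h : ν ⬝ᵥ x' ≤ ν ⬝ᵥ x) (h' : ν' ⬝ᵥ x ≤ ν' ⬝ᵥ x') :
    |x i - x' i| ≤ ∑ j, |x (i.succAbove j) - x' (i.succAbove j)| := by
  have h₁ := mul_sub_apply_le_of_dotProduct_le hν h i
  have h₂ := mul_sub_apply_le_of_dotProduct_le hν' h' i
  simp only [abs_sub_comm (x' _)] at h₂
  rw [← hνν'] at h₂
  rw [← one_mul |x i - x' i|, ← hνi, ← abs_mul, abs_le]
  constructor <;> linarith

end Graph

/-- `∑_{w ∈ ℤ^r} q ^ (‖w‖₁ - n)`, which bounds the number of `w ∈ ℤ^r` with `‖w‖₁ ≤ n`. -/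
noncomputable def latticeBound (r : ℕ) (q n : ℝ) : ℝ := q ^ (-n) * ((1 + q) / (1 - q)) ^ r

theorem hasSum_pow_natAbs {q : ℝ} (hq0 : 0 ≤ q) (hq1 : q < 1) :
    HasSum (fun v : ℤ => q ^ v.natAbs) ((1 + q) / (1 - q)) := by
  have hgeom := hasSum_geometric_of_lt_one hq0 hq1
  have hpos : HasSum (fun n : ℕ => q ^ (n : ℤ).natAbs) (1 - q)⁻¹ := by simpa using hgeom
  have hneg : HasSum (fun n : ℕ => q ^ (-((n : ℤ) + 1)).natAbs) (q * (1 - q)⁻¹) := by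
    have : (fun n : ℕ => q ^ (-((n : ℤ) + 1)).natAbs) = fun n => q * q ^ n := by
      ext n
      rw [show (-((n : ℤ) + 1)).natAbs = n + 1 by omega, pow_succ']
    exact this ▸ hgeom.mul_left q
  have hsum : (1 - q)⁻¹ + q * (1 - q)⁻¹ = (1 + q) / (1 - q) := by
    field_simp [(sub_pos.2 hq1).ne']
  exact hsum ▸ HasSum.of_nat_of_neg_add_one (f := fun v : ℤ => q ^ v.natAbs) hpos hneg

theorem card_le_of_sum_natAbs_le {r : ℕ} (S : Finset (Fin r → ℤ)) {n q : ℝ} (hq0 : 0 < q)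
    (hq1 : q < 1) (hS : ∀ w ∈ S, (∑ j, (w j).natAbs : ℝ) ≤ n) :
    (#S : ℝ) ≤ latticeBound r q n := by
  classical
  set t : Fin r → Finset ℤ := fun j => S.image (· j)
  have hsub : S ⊆ Fintype.piFinset t := fun w hw =>
    Fintype.mem_piFinset.2 fun j => mem_image_of_mem _ hw
  have hterm : ∀ w ∈ S, (1 : ℝ) ≤ q ^ (-n) * ∏ j, q ^ (w j).natAbs := fun w hw => by
    rw [prod_pow_eq_pow_sum, ← Real.rpow_natCast, ← Real.rpow_add hq0]
    exact Real.one_le_rpow_of_pos_of_le_one_of_nonpos hq0 hq1.le (by push_cast; linarith [hS w hw])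
  calc (#S : ℝ) = ∑ w ∈ S, 1 := by simp
    _ ≤ ∑ w ∈ Fintype.piFinset t, q ^ (-n) * ∏ j, q ^ (w j).natAbs :=
        (sum_le_sum hterm).trans (sum_le_sum_of_subset_of_nonneg hsub fun _ _ _ => by positivity)
    _ = q ^ (-n) * ∏ j, ∑ v ∈ t j, q ^ v.natAbs := by rw [← mul_sum, prod_univ_sum]
    _ ≤ latticeBound r q n := by
        unfold latticeBound
        gcongr
        calc ∏ j, ∑ v ∈ t j, q ^ v.natAbs ≤ ∏ _j : Fin r, (1 + q) / (1 - q) :=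
              prod_le_prod (fun _ _ => sum_nonneg fun _ _ => by positivity) fun j _ =>
                sum_le_hasSum _ (fun _ _ => by positivity) (hasSum_pow_natAbs hq0.le hq1)
          _ = ((1 + q) / (1 - q)) ^ r := by rw [prod_const, card_univ, Fintype.card_fin]

section Grid

variable {r : ℕ} {f : (Fin (r + 1) → ℝ) → ℝ} {s : ℝ}

theorem IsSymmNorm.sum_natAbs_le_of_near (hf : IsSymmNorm f) (hs : 0 < s)
    {x : Fin (r + 1) → ℝ} (hx : f x = 1) {z : Fin (r + 1) → ℤ}
    (hxz : ∀ j, |x j - 2 * s * z j| ≤ s) (i : Fin (r + 1)) :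
    ∑ j, ((z (i.succAbove j)).natAbs : ℝ) ≤ (r + 1) / (2 * s * lam f (r + 1)) + r / 2 := by
  have hlam := hf.lam_self_pos
  have hl1 : ∑ j, |x j| ≤ (r + 1) / lam f (r + 1) := by
    rw [le_div_iff₀' hlam]
    simpa [hx] using hf.lam_mul_sum_abs_le x
  have hcoord : ∀ j, 2 * s * |(z j : ℝ)| ≤ |x j| + s := fun j => by
    have := abs_sub_abs_le_abs_sub (2 * s * (z j : ℝ)) (x j)
    rw [abs_sub_comm, abs_mul, abs_of_pos (by positivity : 0 < 2 * s)] at this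
    linarith [hxz j]
  have hsum : 2 * s * ∑ j, ((z (i.succAbove j)).natAbs : ℝ) ≤ (r + 1) / lam f (r + 1) + r * s :=
    calc 2 * s * ∑ j, ((z (i.succAbove j)).natAbs : ℝ)
        ≤ ∑ j, (|x (i.succAbove j)| + s) := by
          rw [mul_sum]; exact sum_le_sum fun j _ => by simpa using hcoord (i.succAbove j)
      _ ≤ ∑ j, |x j| + r * s := by
          rw [sum_add_distrib, Fin.sum_univ_succAbove (fun j => |x j|) i]
          simp
      _ ≤ (r + 1) / lam f (r + 1) + r * s := by linarith
  rw [← mul_le_mul_iff_of_pos_left (by positivity : 0 < 2 * s)]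
  calc _ ≤ (r + 1) / lam f (r + 1) + r * s := hsum
    _ = 2 * s * ((r + 1) / (2 * s * lam f (r + 1)) + r / 2) := by field_simp

theorem abs_sub_le_of_near (hs : 0 < s) {x x' : Fin (r + 1) → ℝ} {z z' : Fin (r + 1) → ℤ}
    {i : Fin (r + 1)} (hxz : ∀ j, |x j - 2 * s * z j| ≤ s) (hxz' : ∀ j, |x' j - 2 * s * z' j| ≤ s)
    (hzz' : ∀ j, z (i.succAbove j) = z' (i.succAbove j))
    (hxx' : |x i - x' i| ≤ ∑ j, |x (i.succAbove j) - x' (i.succAbove j)|) :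
    |z i - z' i| ≤ r + 1 := by
  have hD : ∑ j, |x (i.succAbove j) - x' (i.succAbove j)| ≤ r * (2 * s) := by
    refine (sum_le_card_nsmul _ _ (2 * s) fun j _ => ?_).trans_eq (by simp)
    have hx := hxz (i.succAbove j)
    rw [hzz' j] at hx
    have h := abs_sub_le (x (i.succAbove j)) (2 * s * z' (i.succAbove j)) (x' (i.succAbove j))
    rw [abs_sub_comm (2 * s * (z' (i.succAbove j) : ℝ))] at h
    linarith [hxz' (i.succAbove j)]
  have hzi : 2 * s * |(z i : ℝ) - z' i| ≤ 2 * s * (r + 1) := by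
    rw [← abs_of_pos (by positivity : 0 < 2 * s), ← abs_mul, abs_of_pos (by positivity : 0 < 2 * s)]
    calc |2 * s * ((z i : ℝ) - z' i)|
        = |(x i - x' i) - (x i - 2 * s * z i) + (x' i - 2 * s * z' i)| := by ring_nf
      _ ≤ |x i - x' i| + |x i - 2 * s * z i| + |x' i - 2 * s * z' i| :=
          (abs_add_le _ _).trans (by gcongr; exact abs_sub _ _)
      _ ≤ 2 * s * (r + 1) := by linarith [hxz i, hxz' i]
  exact_mod_cast le_of_mul_le_mul_left hzi (by positivity)

theorem IsSymmNorm.card_grid_le (hf : IsSymmNorm f) (hs : 0 < s) (Z : Finset (Fin (r + 1) → ℤ))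
    (hZ : ∀ z ∈ Z, ∃ x, f x = 1 ∧ ∀ j, |x j - 2 * s * z j| ≤ s) {q : ℝ} (hq0 : 0 < q)
    (hq1 : q < 1) :
    (#Z : ℝ) ≤
      2 * (r + 1) * (2 * r + 3) * latticeBound r q ((r + 1) / (2 * s * lam f (r + 1)) + r / 2) := by
  classical
  choose! x hx hxz using hZ
  choose! ν i hνi hν1 hν using fun z (hz : z ∈ Z) => hf.exists_normalized_dual (hx z hz).ge
  let proj : (Fin (r + 1) → ℤ) → Fin r → ℤ := fun z => z ∘ (i z).succAbove
  -- Two points with the same key agree off `i z` and differ by at most `r + 1` at `i z`, so their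
  -- residues modulo `2 * r + 3` tell them apart.
  let key : (Fin (r + 1) → ℤ) → Fin (r + 1) × ℝ × (Fin r → ℤ) × ZMod (2 * r + 3) :=
    fun z => (i z, ν z (i z), proj z, z (i z))
  let T : Finset (Fin (r + 1) × ℝ × (Fin r → ℤ) × ZMod (2 * r + 3)) :=
    univ ×ˢ {1, -1} ×ˢ Z.image proj ×ˢ univ
  have hmaps : Set.MapsTo key Z T := fun z hz => by
    rw [mem_coe, mem_product, mem_product, mem_product]
    refine ⟨mem_univ _, ?_, mem_image_of_mem proj hz, mem_univ _⟩
    simpa [key] using abs_eq_abs.1 ((hνi z hz).trans abs_one.symm)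
  have hinj : Set.InjOn key Z := by
    intro z hz z' hz' hzz'
    simp only [key, Prod.mk.injEq] at hzz'
    obtain ⟨hi, hνν', hp, hmod⟩ := hzz'
    have hrest : ∀ j, z ((i z).succAbove j) = z' ((i z).succAbove j) := fun j => by
      simpa [proj, hi] using congrFun hp j
    have hclose : |z (i z) - z' (i z)| ≤ r + 1 :=
      abs_sub_le_of_near hs (hxz z hz) (hxz z' hz') hrest <|
        abs_sub_apply_le_of_dotProduct_le (hν1 z hz) (hν1 z' hz') (hνi z hz) (hi ▸ hνν')
          (hν z hz _ (hx z' hz').le) (hν z' hz' _ (hx z hz).le)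
    have hzi : z (i z) = z' (i z) := by
      rw [← hi] at hmod
      have hdvd := (ZMod.intCast_eq_intCast_iff_dvd_sub _ _ _).1 hmod
      have := Int.eq_zero_of_abs_lt_dvd hdvd (by rw [abs_sub_comm]; push_cast; omega)
      omega
    ext j
    by_cases hj : j = i z
    · exact hj ▸ hzi
    · obtain ⟨k, rfl⟩ := Fin.exists_succAbove_eq hj
      exact hrest k
  have hcard : #Z ≤ (r + 1) * 2 * #(Z.image proj) * (2 * r + 3) := by
    refine (card_le_card_of_injOn key hmaps hinj).trans ?_
    simp only [T, card_product, card_univ, Fintype.card_fin, ZMod.card]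
    calc _ ≤ (r + 1) * (2 * (#(Z.image proj) * (2 * r + 3))) := by gcongr; exact card_le_two
      _ = _ := by ring
  have hW := card_le_of_sum_natAbs_le (Z.image proj) hq0 hq1
    (n := (r + 1) / (2 * s * lam f (r + 1)) + r / 2) <| by
      simp only [mem_image, forall_exists_index, and_imp]
      rintro _ z hz rfl
      exact hf.sum_natAbs_le_of_near hs (hx z hz) (hxz z hz) (i z)
  calc (#Z : ℝ) ≤ (r + 1) * 2 * #(Z.image proj) * (2 * r + 3) := by exact_mod_cast hcard
    _ = 2 * (r + 1) * (2 * r + 3) * #(Z.image proj) := by ring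
    _ ≤ _ := by gcongr

end Grid

section Entropy

theorem entropyNumber_le_of_cover {d k : ℕ} {f : (Fin d → ℝ) → ℝ} (hf : IsSymmNorm f)
    {K : Set (Fin d → ℝ)} {ε : ℝ} (hε : 0 < ε) (C : Finset (Fin d → ℝ)) (hC : #C ≤ 2 ^ (k - 1))
    (hK : ∀ y ∈ K, ∃ c ∈ C, f (y - c) ≤ ε) : entropyNumber K {x | f x ≤ 1} k ≤ ε := by
  classical
  refine csInf_le ⟨0, fun _ h => h.1.le⟩ ⟨hε, fun j => if h : (j : ℕ) < #C then
    C.equivFin.symm ⟨j, h⟩ else 0, fun y hy => ?_⟩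
  obtain ⟨c, hc, hyc⟩ := hK y hy
  refine Set.mem_iUnion.2 ⟨Fin.castLE hC (C.equivFin ⟨c, hc⟩), ?_⟩
  simp only [Fin.val_castLE, Fin.is_lt, dif_pos, Fin.eta, Equiv.symm_apply_apply]
  refine Set.mem_vadd_set.2 ⟨y - c, Set.mem_smul_set.2 ⟨ε⁻¹ • (y - c), ?_, ?_⟩, by simp⟩
  · rw [Set.mem_ofPred_eq, hf.map_smul, abs_of_pos (inv_pos.2 hε), inv_mul_le_one₀ hε]
    exact hyc
  · exact smul_inv_smul₀ hε.ne' _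

theorem abs_sub_mul_round_le {s : ℝ} (hs : 0 < s) (t : ℝ) :
    |t - 2 * s * round (t / (2 * s))| ≤ s := by
  have h := mul_le_mul_of_nonneg_left (abs_sub_round (t / (2 * s))) (by positivity : 0 ≤ 2 * s)
  rwa [← abs_of_pos (by positivity : 0 < 2 * s), ← abs_mul, abs_of_pos (by positivity : 0 < 2 * s),
    mul_sub, mul_div_cancel₀ _ (by positivity), mul_one_div, mul_div_cancel_left₀ _ two_ne_zero]
    at h

theorem abs_round_div_le {s t : ℝ} (hs : 0 < s) (ht : |t| ≤ 1) :
    |round (t / (2 * s))| ≤ ⌈1 / (2 * s)⌉₊ + 1 := by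
  have h₁ : |t / (2 * s)| ≤ 1 / (2 * s) := by
    rw [abs_div, abs_of_pos (by positivity : 0 < 2 * s)]
    exact div_le_div_of_nonneg_right ht (by positivity)
  have h₂ := abs_sub_abs_le_abs_sub (round (t / (2 * s)) : ℝ) (t / (2 * s))
  rw [abs_sub_comm] at h₂
  have : |(round (t / (2 * s)) : ℝ)| ≤ ⌈1 / (2 * s)⌉₊ + 1 := by
    linarith [abs_sub_round (t / (2 * s)), Nat.le_ceil (1 / (2 * s))]
  exact_mod_cast this

variable {r : ℕ} {nX nY : (Fin (r + 1) → ℝ) → ℝ}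

theorem entropyNumber_sphere_le_lam (hX : IsSymmNorm nX) (hbX : ∀ i, nX (Pi.single i 1) = 1)
    (hY : IsSymmNorm nY) (k : ℕ) :
    entropyNumber {x | nX x = 1} {x | nY x ≤ 1} k ≤ lam nY (r + 1) :=
  entropyNumber_le_of_cover hY hY.lam_self_pos {0} (by simpa using Nat.one_le_two_pow)
    fun y hy => ⟨0, mem_singleton_self _, by
      simpa using hY.le_mul_lam zero_le_one fun i => (hX.abs_apply_le hbX y i).trans_eq hy⟩

theorem entropyNumber_sphere_le_of_latticeBound_le (hX : IsSymmNorm nX)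
    (hbX : ∀ i, nX (Pi.single i 1) = 1) (hY : IsSymmNorm nY) {s : ℝ} (hs : 0 < s) {k : ℕ}
    {q : ℝ} (hq0 : 0 < q) (hq1 : q < 1)
    (hcount : 2 * (r + 1) * (2 * r + 3) *
      latticeBound r q ((r + 1) / (2 * s * lam nX (r + 1)) + r / 2) ≤ 2 ^ (k - 1)) :
    entropyNumber {x | nX x = 1} {x | nY x ≤ 1} k ≤ s * lam nY (r + 1) := by
  classical
  set M : ℤ := ⌈1 / (2 * s)⌉₊ + 1
  set Z := (Fintype.piFinset fun _ => Icc (-M) M).filter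
    fun z : Fin (r + 1) → ℤ => ∃ x, nX x = 1 ∧ ∀ j, |x j - 2 * s * z j| ≤ s
  have hround : ∀ x, nX x = 1 → ∃ z ∈ Z, ∀ j, |x j - 2 * s * z j| ≤ s := fun x hx =>
    ⟨fun j => round (x j / (2 * s)), mem_filter.2 ⟨Fintype.mem_piFinset.2 fun j =>
      mem_Icc.2 (abs_le.1 (abs_round_div_le hs (hx ▸ hX.abs_apply_le hbX x j))), x, hx,
        fun j => abs_sub_mul_round_le hs _⟩, fun j => abs_sub_mul_round_le hs _⟩
  have hZ := hX.card_grid_le hs Z (fun z hz => (mem_filter.1 hz).2) hq0 hq1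
  refine entropyNumber_le_of_cover hY (by positivity [hY.lam_self_pos])
    (Z.image fun z j => 2 * s * z j) (card_image_le.trans ?_) fun y hy => ?_
  · exact_mod_cast hZ.trans hcount
  · obtain ⟨z, hz, hyz⟩ := hround y hy
    exact ⟨_, mem_image_of_mem _ hz, hY.le_mul_lam hs.le hyz⟩

end Entropy

theorem mul_latticeBound_le_pow {r : ℕ} {P c q a n m : ℝ} (hq0 : 0 < q) (hq1 : q < 1)
    (hn : n ≤ a * r) (hc : 0 ≤ c) (hP : P ≤ c ^ r)
    (hm : c * q ^ (-a) * ((1 + q) / (1 - q)) ≤ m) :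
    P * latticeBound r q n ≤ m ^ r := by
  have hB : 0 < (1 + q) / (1 - q) := div_pos (by linarith) (by linarith)
  have hqn : q ^ (-n) ≤ (q ^ (-a)) ^ r := by
    rw [← Real.rpow_natCast, ← Real.rpow_mul hq0.le]
    exact Real.rpow_le_rpow_of_exponent_ge hq0 hq1.le (by linarith)
  calc P * latticeBound r q n
      = P * (q ^ (-n) * ((1 + q) / (1 - q)) ^ r) := rfl
    _ ≤ c ^ r * ((q ^ (-a)) ^ r * ((1 + q) / (1 - q)) ^ r) := by gcongr
    _ = (c * q ^ (-a) * ((1 + q) / (1 - q))) ^ r := by rw [mul_pow, mul_pow, mul_assoc]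
    _ ≤ m ^ r := pow_le_pow_left₀ (by positivity) hm r

theorem quadratic_le_forty_pow {r : ℕ} (hr : 1 ≤ r) :
    (4 * (r + 1) * (2 * r + 3) : ℝ) ≤ 40 ^ r := by
  induction r, hr using Nat.le_induction with
  | base => norm_num
  | succ r hr ih =>
    push_cast
    rw [pow_succ]
    nlinarith

theorem quadratic_le_pow_of_ge {r : ℕ} (hr : 511 ≤ r) :
    (4 * (r + 1) * (2 * r + 3) : ℝ) ≤ (21 / 20) ^ r := by
  induction r, hr using Nat.le_induction with
  | base =>
    calc (4 * ((511 : ℕ) + 1) * (2 * (511 : ℕ) + 3) : ℝ) ≤ (9 / 5) ^ 31 := by norm_num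
      _ ≤ ((21 / 20) ^ 16) ^ 31 := by gcongr; norm_num
      _ = (21 / 20) ^ 496 := by rw [← pow_mul]
      _ ≤ (21 / 20) ^ 511 := pow_le_pow_right₀ (by norm_num) (by norm_num)
  | succ r hr ih =>
    have : (511 : ℝ) ≤ r := by exact_mod_cast hr
    push_cast
    rw [pow_succ]
    nlinarith

theorem exists_latticeBound_le_of_large {r : ℕ} (hr : 1 ≤ r) {m n : ℝ} (hm : 2 ^ 10 ≤ m)
    (hn : n ≤ (1 / 2 + 2 * m / 2 ^ 20) * r) :
    ∃ q, 0 < q ∧ q < 1 ∧ 4 * (r + 1) * (2 * r + 3) * latticeBound r q n ≤ m ^ r := by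
  set a := 1 / 2 + 2 * m / 2 ^ 20
  have ha : 0 < a := by positivity
  refine ⟨a / (a + 1), by positivity, (div_lt_one (by positivity)).2 (by linarith), ?_⟩
  refine mul_latticeBound_le_pow (by positivity) ((div_lt_one (by positivity)).2 (by linarith)) hn
    (by norm_num) (quadratic_le_forty_pow hr) ?_
  have hexp : (a / (a + 1)) ^ (-a) ≤ 3 :=
    calc (a / (a + 1)) ^ (-a) = (1 + 1 / a) ^ a := by
          rw [Real.rpow_neg (by positivity), ← Real.inv_rpow (by positivity), inv_div, add_div,
            div_self ha.ne', add_comm]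
      _ ≤ Real.exp (1 / a) ^ a :=
          Real.rpow_le_rpow (by positivity) (by linarith [Real.add_one_le_exp (1 / a)]) ha.le
      _ = Real.exp 1 := by rw [← Real.exp_mul, one_div_mul_cancel ha.ne']
      _ ≤ 3 := by linarith [Real.exp_one_lt_d9]
  have hratio : (1 + a / (a + 1)) / (1 - a / (a + 1)) = 2 * a + 1 := by
    field_simp
    ring
  rw [hratio]
  calc 40 * (a / (a + 1)) ^ (-a) * (2 * a + 1) ≤ 40 * 3 * (2 * a + 1) := by gcongr
    _ ≤ m := by simp only [a]; linarith

theorem latticeBound_quarter_le {r : ℕ} (hr : 511 ≤ r) {m n : ℝ} (hm : 4 ≤ m)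
    (hn : n ≤ (1 / 2 + 1 / 512) * r) :
    4 * (r + 1) * (2 * r + 3) * latticeBound r (1 / 4) n ≤ m ^ r := by
  refine mul_latticeBound_le_pow (by norm_num) (by norm_num) hn (by norm_num)
    (quadratic_le_pow_of_ge hr) ?_
  have hsqrt : (4 : ℝ) ^ (1 / 2 : ℝ) = 2 := by
    rw [show (4 : ℝ) = 2 ^ (2 : ℝ) by norm_num, ← Real.rpow_mul (by norm_num)]
    norm_num
  have hroot : (4 : ℝ) ^ (1 / 512 : ℝ) ≤ 1 + 3 / 512 := by
    have := rpow_one_add_le_one_add_mul_self (s := 3) (p := 1 / 512) (by norm_num) (by norm_num)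
      (by norm_num)
    norm_num at this ⊢
    exact this
  have : (1 / 4 : ℝ) ^ (-(1 / 2 + 1 / 512 : ℝ)) ≤ 2 * (1 + 3 / 512) := by
    rw [Real.rpow_neg (by norm_num), ← Real.inv_rpow (by norm_num), one_div, inv_inv,
      Real.rpow_add (by norm_num), hsqrt]
    gcongr
  nlinarith

theorem exists_latticeBound_le {r : ℕ} (hr : 1 ≤ r) {m n : ℝ} (hm : 4 ≤ m)
    (hn : n ≤ (1 / 2 + 2 * m / 2 ^ 20) * r) (hrm : 2 ^ 20 < 2 * m * (r + 1)) :
    ∃ q, 0 < q ∧ q < 1 ∧ 4 * (r + 1) * (2 * r + 3) * latticeBound r q n ≤ m ^ r := by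
  -- For small `m`, `hrm` forces `r ≥ 511`, where `(21 / 20) ^ r` absorbs the polynomial factor.
  rcases lt_or_ge m (2 ^ 10) with hlo | hhi
  · have hr' : 511 ≤ r := by
      have : (511 : ℝ) < r := by nlinarith
      exact_mod_cast this.le
    refine ⟨1 / 4, by norm_num, by norm_num, latticeBound_quarter_le hr' hm (hn.trans ?_)⟩
    exact mul_le_mul_of_nonneg_right (by linarith) r.cast_nonneg
  · exact exists_latticeBound_le_of_large hr hhi hn

theorem entropyNumber_sphere_le_of_scale {r : ℕ} {nX nY : (Fin (r + 1) → ℝ) → ℝ}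
    (hX : IsSymmNorm nX) (hbX : ∀ i, nX (Pi.single i 1) = 1) (hY : IsSymmNorm nY) (hr : 1 ≤ r)
    {k : ℕ} (hk : 2 * r ≤ k)
    {s : ℝ} (hs0 : 0 < s) (hs1 : s < 1)
    (hsm : 2 ^ 20 ≤ 2 * (2 : ℝ) ^ ((k : ℝ) / r) * lam nX (r + 1) * s) :
    entropyNumber {x | nX x = 1} {x | nY x ≤ 1} k ≤ s * lam nY (r + 1) := by
  set m : ℝ := 2 ^ ((k : ℝ) / r)
  have hr0 : (0 : ℝ) < r := by exact_mod_cast hr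
  have hm4 : 4 ≤ m :=
    calc (4 : ℝ) = 2 ^ (2 : ℝ) := by norm_num
      _ ≤ m := Real.rpow_le_rpow_of_exponent_le (by norm_num)
          (by rw [le_div_iff₀ hr0]; exact_mod_cast hk)
  have hmr : m ^ r = 2 ^ k := by
    rw [← Real.rpow_natCast, ← Real.rpow_mul (by norm_num), div_mul_cancel₀ _ hr0.ne',
      Real.rpow_natCast]
  have hlam := hX.lam_self_pos
  have hlam_le : lam nX (r + 1) ≤ r + 1 := by exact_mod_cast hX.lam_self_le hbX
  have hscale : (r + 1) / (2 * s * lam nX (r + 1)) ≤ (r + 1) * m / 2 ^ 20 := by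
    rw [div_le_div_iff₀ (by positivity) (by norm_num)]
    nlinarith
  have hn : (r + 1) / (2 * s * lam nX (r + 1)) + r / 2 ≤ (1 / 2 + 2 * m / 2 ^ 20) * r := by
    have : ((r : ℝ) + 1) * m ≤ 2 * r * m := by nlinarith [(Nat.one_le_cast.2 hr : (1 : ℝ) ≤ r)]
    linarith
  have hrm : 2 ^ 20 < 2 * m * (r + 1) :=
    calc 2 ^ 20 ≤ 2 * m * lam nX (r + 1) * s := hsm
      _ < 2 * m * lam nX (r + 1) := mul_lt_of_lt_one_right (by positivity) hs1
      _ ≤ 2 * m * (r + 1) := by gcongr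
  obtain ⟨q, hq0, hq1, hcount⟩ := exists_latticeBound_le hr hm4 hn hrm
  have hk : (2 : ℝ) ^ k = 2 * 2 ^ (k - 1) := by rw [← pow_succ', Nat.sub_add_cancel (by omega)]
  exact entropyNumber_sphere_le_of_latticeBound_le hX hbX hY hs0 hq0 hq1 (by linarith)

/-- There is a universal constant `C > 0` such that for all `d ≥ 2`, all
symmetric norms `‖·‖_X`, `‖·‖_Y` on `ℝ^d` with normalized standard basis vectors, and all
`k ≥ 2d + ⌈log₂ d⌉ − 1`,
`e_k(S_X, B_Y) ≤ C · 2^{−k/(d−1)} · λ_Y(d−1)/λ_X(d−1)`. -/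
theorem entropy_symm_upper_large :
    ∃ C : ℝ, 0 < C ∧ ∀ (d : ℕ), 2 ≤ d → ∀ nX nY : (Fin d → ℝ) → ℝ,
      IsSymmNorm nX → IsSymmNorm nY →
      (∀ i : Fin d, nX (Pi.single i 1) = 1) →
      (∀ i : Fin d, nY (Pi.single i 1) = 1) →
      ∀ k : ℕ, 2 * d + Nat.clog 2 d - 1 ≤ k →
        entropyNumber {x | nX x = 1} {x | nY x ≤ 1} k ≤
          C * 2 ^ (-(k : ℝ) / ((d : ℝ) - 1)) * (lam nY (d - 1) / lam nX (d - 1)) := by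
  refine ⟨2 ^ 20, by norm_num, fun d hd nX nY hX hY hbX hbY k hk => ?_⟩
  obtain ⟨r, rfl⟩ : ∃ r, d = r + 1 := ⟨d - 1, by omega⟩
  have hr : 1 ≤ r := by omega
  simp only [Nat.add_sub_cancel, Nat.cast_add, Nat.cast_one, add_sub_cancel_right]
  rw [neg_div, Real.rpow_neg (by norm_num)]
  set m : ℝ := 2 ^ ((k : ℝ) / r)
  set ε : ℝ := 2 ^ 20 * m⁻¹ * (lam nY r / lam nX r)
  rcases le_or_gt (lam nY (r + 1)) ε with hε | hε
  · exact (entropyNumber_sphere_le_lam hX hbX hY k).trans hε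
  have hY0 := hY.lam_self_pos
  have hX1 := hX.one_le_lam hbX hr
  have hY1 := hY.one_le_lam hbY hr
  have hXr := hX.lam_mono (Nat.le_succ r)
  have hYr : lam nY (r + 1) ≤ 2 * lam nY r := by linarith [hY.lam_succ_le hbY r]
  have hsm : 2 ^ 20 ≤ 2 * m * lam nX (r + 1) * (ε / lam nY (r + 1)) := by
    have hm : 0 < m := by positivity
    simp only [ε]
    field_simp
    nlinarith [mul_le_mul hXr hYr hY0.le (by linarith)]
  calc entropyNumber {x | nX x = 1} {x | nY x ≤ 1} k
      ≤ ε / lam nY (r + 1) * lam nY (r + 1) :=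
        entropyNumber_sphere_le_of_scale hX hbX hY hr (by omega) (by positivity)
          ((div_lt_one hY0).2 hε) hsm
    _ = ε := div_mul_cancel₀ _ hY0.ne'
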